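/- arXiv:2006.03505 — 6 statements merged into one kernel-verified Lean document; each statement's English description precedes it below -/
import Mathlib

section
/- Let (A, E) be an exact category. If the class of admissible morphisms is closed under composition, then A is abelian and E is the class of all kernel-cokernel pairs. In particular, every morphism f: X → Y factors as the section [1, f]^T : X → X ⊕ Y followed by the retraction [0, 1] : X ⊕ Y → Y, both of which are admissible, hence every morphism is admissible. -/
open CategoryTheory CategoryTheory.Limits

universe v u

variable {C : Type u} [Category.{v} C] [Preadditive C]

/-- `(i, d)` is a kernel-cokernel pair. -/
structure IsKernelCokernelPair {A B X : C} (i : A ⟶ B) (d : B ⟶ X) : Prop where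
  w : i ≫ d = 0
  isKernel : Nonempty (IsLimit (KernelFork.ofι i w))
  isCokernel : Nonempty (IsColimit (CokernelCofork.ofπ d w))

/-- A Quillen exact structure on an additive category. -/
structure ExactStructure (C : Type u) [Category.{v} C] [Preadditive C] :
    Type (max u v) where
  E : ∀ ⦃A B X : C⦄, (A ⟶ B) → (B ⟶ X) → Prop
  pair : ∀ ⦃A B X : C⦄ {i : A ⟶ B} {d : B ⟶ X}, E i d → IsKernelCokernelPair i d
  iso_closed : ∀ ⦃A B X A' B' X' : C⦄ {i : A ⟶ B} {d : B ⟶ X} {i' : A' ⟶ B'} {d' : B' ⟶ X'}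
      (eA : A ≅ A') (eB : B ≅ B') (eX : X ≅ X'),
      E i d → i ≫ eB.hom = eA.hom ≫ i' → d ≫ eX.hom = eB.hom ≫ d' → E i' d'
  admMono_id : ∀ A : C, ∃ (X : C) (d : A ⟶ X), E (𝟙 A) d
  admEpi_id : ∀ A : C, ∃ (X : C) (i : X ⟶ A), E i (𝟙 A)
  admMono_comp : ∀ ⦃A B D : C⦄ (f : A ⟶ B) (g : B ⟶ D),
      (∃ (X : C) (d : B ⟶ X), E f d) → (∃ (X : C) (d : D ⟶ X), E g d) →
      ∃ (X : C) (d : D ⟶ X), E (f ≫ g) d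
  admEpi_comp : ∀ ⦃A B D : C⦄ (f : A ⟶ B) (g : B ⟶ D),
      (∃ (X : C) (i : X ⟶ A), E i f) → (∃ (X : C) (i : X ⟶ B), E i g) →
      ∃ (X : C) (i : X ⟶ A), E i (f ≫ g)
  pushout_admMono : ∀ ⦃A B Z : C⦄ (i : A ⟶ B) (f : A ⟶ Z),
      (∃ (X : C) (d : B ⟶ X), E i d) →
      ∃ (D : C) (g : B ⟶ D) (j : Z ⟶ D) (w : i ≫ g = f ≫ j),
        Nonempty (IsColimit (PushoutCocone.mk g j w)) ∧ ∃ (X : C) (d : D ⟶ X), E j d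
  pullback_admEpi : ∀ ⦃B D Z : C⦄ (h : B ⟶ D) (g : Z ⟶ D),
      (∃ (X : C) (i : X ⟶ B), E i h) →
      ∃ (A : C) (f : A ⟶ B) (k : A ⟶ Z) (w : f ≫ h = k ≫ g),
        Nonempty (IsLimit (PullbackCone.mk f k w)) ∧ ∃ (X : C) (i : X ⟶ A), E i k

namespace ExactStructure

variable (Ex : ExactStructure C)

/-- `i` is an admissible monic. -/
def AdmMono {A B : C} (i : A ⟶ B) : Prop := ∃ (X : C) (d : B ⟶ X), Ex.E i d

/-- `d` is an admissible epic. -/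
def AdmEpi {B X : C} (d : B ⟶ X) : Prop := ∃ (A : C) (i : A ⟶ B), Ex.E i d

/-- `f` is admissible: it factors as an admissible epic followed by an admissible monic. -/
def Admissible {A B : C} (f : A ⟶ B) : Prop :=
  ∃ (Z : C) (e : A ⟶ Z) (m : Z ⟶ B), Ex.AdmEpi e ∧ Ex.AdmMono m ∧ e ≫ m = f

/-- `E` consists of all kernel-cokernel pairs. -/
def IsMaximalAll : Prop :=
  ∀ ⦃A B X : C⦄ (i : A ⟶ B) (d : B ⟶ X), IsKernelCokernelPair i d → Ex.E i d

/-- `S` is `E`-simple. -/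
def ESimple (S : C) : Prop :=
  ¬ IsZero S ∧ ∀ ⦃A : C⦄ (i : A ⟶ S), Ex.AdmMono i → IsZero A ∨ IsIso i

end ExactStructure

/-- `A` is abelian: it has finite products, kernels, cokernels, every mono is normal
and every epi is normal. -/
def IsAbelianCat (C : Type u) [Category.{v} C] [Preadditive C] : Prop :=
  HasFiniteProducts C ∧ HasKernels C ∧ HasCokernels C ∧
  (∀ ⦃X Y : C⦄ (f : X ⟶ Y), Mono f → Nonempty (NormalMono f)) ∧
  (∀ ⦃X Y : C⦄ (f : X ⟶ Y), Epi f → Nonempty (NormalEpi f))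

/-- An admissible (`E`-)subobject of `X`. -/
structure ESub (Ex : ExactStructure C) (X : C) where
  obj : C
  ι : obj ⟶ X
  adm : Ex.AdmMono ι

/-- The order on `E`-subobjects of `X`. -/
def ESubLe (Ex : ExactStructure C) {X : C} (s t : ESub Ex X) : Prop :=
  ∃ h : s.obj ⟶ t.obj, Ex.AdmMono h ∧ h ≫ t.ι = s.ι

/-- Two `E`-subobjects are isomorphic as subobjects. -/
def ESubEquiv (Ex : ExactStructure C) {X : C} (s t : ESub Ex X) : Prop :=
  ESubLe Ex s t ∧ ESubLe Ex t s

/-- The admissible intersection axiom (AI). -/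
def AIAxiom (Ex : ExactStructure C) : Prop :=
  ∀ ⦃B Z D : C⦄ (g : B ⟶ D) (j : Z ⟶ D), Ex.AdmMono g → Ex.AdmMono j →
    ∃ (A : C) (f : A ⟶ B) (f' : A ⟶ Z) (w : f ≫ g = f' ≫ j),
      Ex.AdmMono f ∧ Ex.AdmMono f' ∧ Nonempty (IsLimit (PullbackCone.mk f f' w))

/-- The admissible sum axiom (AS): for every pullback square of admissible monics,
the induced map from the pushout to the common codomain is an admissible monic. -/
def ASAxiom (Ex : ExactStructure C) : Prop :=
  ∀ ⦃A B Z D : C⦄ (f : A ⟶ B) (f' : A ⟶ Z) (g : B ⟶ D) (j : Z ⟶ D) (w : f ≫ g = f' ≫ j),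
    Ex.AdmMono f → Ex.AdmMono f' → Ex.AdmMono g → Ex.AdmMono j →
    IsLimit (PullbackCone.mk f f' w) →
    ∀ ⦃P : C⦄ (l : B ⟶ P) (k : Z ⟶ P) (w' : f ≫ l = f' ≫ k),
      IsColimit (PushoutCocone.mk l k w') →
      ∀ u : P ⟶ D, l ≫ u = g → k ≫ u = j → Ex.AdmMono u

/-- An AIS-category: an AI-category satisfying the admissible sum axiom. -/
def AISCat (Ex : ExactStructure C) : Prop := AIAxiom Ex ∧ ASAxiom Ex

/-- `f` is a kernel of some morphism. -/
def IsKernelMor {A B : C} (f : A ⟶ B) : Prop :=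
  ∃ (Z : C) (g : B ⟶ Z) (w : f ≫ g = 0), Nonempty (IsLimit (KernelFork.ofι f w))

/-- `f` is a cokernel of some morphism. -/
def IsCokernelMor {A B : C} (f : A ⟶ B) : Prop :=
  ∃ (Z : C) (g : Z ⟶ A) (w : g ≫ f = 0), Nonempty (IsColimit (CokernelCofork.ofπ f w))

/-- A quasi-abelian category: pre-abelian, kernels are stable under pushout and
cokernels are stable under pullback. -/
def IsQuasiAbelian (C : Type u) [Category.{v} C] [Preadditive C] : Prop :=
  HasKernels C ∧ HasCokernels C ∧
  (∀ ⦃A B Z : C⦄ (f : A ⟶ B) (t : A ⟶ Z), IsKernelMor f →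
    ∀ ⦃P : C⦄ (s : B ⟶ P) (s' : Z ⟶ P) (w : f ≫ s = t ≫ s'),
      IsColimit (PushoutCocone.mk s s' w) → IsKernelMor s') ∧
  (∀ ⦃A B Z : C⦄ (f : B ⟶ A) (t : Z ⟶ A), IsCokernelMor f →
    ∀ ⦃P : C⦄ (s : P ⟶ B) (s' : P ⟶ Z) (w : s ≫ f = s' ≫ t),
      IsLimit (PullbackCone.mk s s' w) → IsCokernelMor s')

/-- An `E`-composition series of length `n` for `X`. -/
structure CompSeries (Ex : ExactStructure C) (X : C) (n : ℕ) where
  obj : Fin (n + 1) → C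
  map : ∀ i : Fin n, obj i.castSucc ⟶ obj i.succ
  zero : IsZero (obj 0)
  top : obj (Fin.last n) ≅ X
  adm : ∀ i : Fin n, Ex.AdmMono (map i)
  simpleFactor : ∀ i : Fin n,
    ∃ (Q : C) (d : obj i.succ ⟶ Q), Ex.E (map i) d ∧ Ex.ESimple Q

/-- Two composition series are equivalent: there is a bijection of indices matching
isomorphic composition factors. -/
def CompSeries.EquivSeries {Ex : ExactStructure C} {X : C} {n m : ℕ}
    (s : CompSeries Ex X n) (t : CompSeries Ex X m) : Prop :=
  ∃ σ : Fin n ≃ Fin m, ∀ (i : Fin n) ⦃Q Q' : C⦄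
    (d : s.obj i.succ ⟶ Q) (d' : t.obj (σ i).succ ⟶ Q'),
    Ex.E (s.map i) d → Ex.E (t.map (σ i)) d' → Nonempty (Q ≅ Q')

/-- The Jordan-Hölder property for an exact structure. -/
def JordanHolder (Ex : ExactStructure C) : Prop :=
  ∀ (X : C) (n m : ℕ) (s : CompSeries Ex X n) (t : CompSeries Ex X m),
    n = m ∧ s.EquivSeries t

/-- A maximal `E`-subobject: one with `E`-simple cokernel. -/
def ESub.IsMax {Ex : ExactStructure C} {X : C} (A : ESub Ex X) : Prop :=
  ∃ (Q : C) (d : X ⟶ Q), Ex.E A.ι d ∧ Ex.ESimple Q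

/-- `Y` belongs to the generalized intersection `Int_X(A, B)`: it is a maximal common
`E`-subobject of `A` and `B`. -/
def InInt {Ex : ExactStructure C} {X : C} (A B Y : ESub Ex X) : Prop :=
  ESubLe Ex Y A ∧ ESubLe Ex Y B ∧
  ∀ Z : ESub Ex X, ESubLe Ex Z A → ESubLe Ex Z B → ESubLe Ex Y Z → ESubLe Ex Z Y

/-- A diamond exact category. -/
def DiamondCat (Ex : ExactStructure C) : Prop :=
  ∀ (X : C) (A B : ESub Ex X), A.IsMax → B.IsMax → ¬ ESubEquiv Ex A B →
    ∀ Y : ESub Ex X, InInt A B Y →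
      (∀ (h : Y.obj ⟶ A.obj), Ex.AdmMono h → h ≫ A.ι = Y.ι →
        ∀ ⦃Q : C⦄ (d : A.obj ⟶ Q), Ex.E h d → Ex.ESimple Q) ∧
      (∀ (h : Y.obj ⟶ B.obj), Ex.AdmMono h → h ≫ B.ι = Y.ι →
        ∀ ⦃Q : C⦄ (d : B.obj ⟶ Q), Ex.E h d → Ex.ESimple Q) ∧
      (∀ (hA : Y.obj ⟶ A.obj) (hB : Y.obj ⟶ B.obj), Ex.AdmMono hA → Ex.AdmMono hB →
        hA ≫ A.ι = Y.ι → hB ≫ B.ι = Y.ι →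
        ∀ ⦃QXA QAY QXB QBY : C⦄
          (dXA : X ⟶ QXA) (dAY : A.obj ⟶ QAY) (dXB : X ⟶ QXB) (dBY : B.obj ⟶ QBY),
          Ex.E A.ι dXA → Ex.E hA dAY → Ex.E B.ι dXB → Ex.E hB dBY →
          (Nonempty (QXA ≅ QXB) ∧ Nonempty (QAY ≅ QBY)) ∨
          (Nonempty (QXA ≅ QBY) ∧ Nonempty (QAY ≅ QXB)))

/-! Split exact sequences lie in every exact structure, so for `f : X ⟶ Y` the section
`[1, f]ᵀ : X ⟶ X ⊞ Y` is an admissible monic and the retraction `[0, 1] : X ⊞ Y ⟶ Y` an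
admissible epic; closure under composition makes `f` admissible. A monic admissible morphism
is an admissible monic, because the epic half of its factorization is then an isomorphism;
dually for epics. So every monic is the kernel of its admissible cokernel and every epic the
cokernel of its admissible kernel, kernels and cokernels exist, and every kernel-cokernel pair
is isomorphic to one in `E`. -/

namespace ExactStructure

variable {Ex : ExactStructure C}

theorem AdmMono.mono {A B : C} {i : A ⟶ B} (hi : Ex.AdmMono i) : Mono i := by
  obtain ⟨_, _, hE⟩ := hi
  exact mono_of_isLimit_fork (Ex.pair hE).isKernel.some

theorem AdmEpi.epi {B X : C} {d : B ⟶ X} (hd : Ex.AdmEpi d) : Epi d := by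
  obtain ⟨_, _, hE⟩ := hd
  exact epi_of_isColimit_cofork (Ex.pair hE).isCokernel.some

theorem AdmMono.comp_isIso {A B B' : C} {i : A ⟶ B} (hi : Ex.AdmMono i) (φ : B ⟶ B')
    [IsIso φ] : Ex.AdmMono (i ≫ φ) := by
  obtain ⟨X, d, hE⟩ := hi
  exact ⟨X, inv φ ≫ d,
    Ex.iso_closed (Iso.refl A) (asIso φ) (Iso.refl X) hE (by simp) (by simp)⟩

theorem AdmMono.isIso_comp {A A' B : C} {i : A ⟶ B} (hi : Ex.AdmMono i) (φ : A' ⟶ A)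
    [IsIso φ] : Ex.AdmMono (φ ≫ i) := by
  obtain ⟨X, d, hE⟩ := hi
  exact ⟨X, d, Ex.iso_closed (asIso φ).symm (Iso.refl B) (Iso.refl X) hE (by simp) (by simp)⟩

theorem AdmEpi.comp_isIso {B X X' : C} {d : B ⟶ X} (hd : Ex.AdmEpi d) (φ : X ⟶ X')
    [IsIso φ] : Ex.AdmEpi (d ≫ φ) := by
  obtain ⟨A, i, hE⟩ := hd
  exact ⟨A, i, Ex.iso_closed (Iso.refl A) (Iso.refl B) (asIso φ) hE (by simp) (by simp)⟩

theorem AdmEpi.isIso_comp {B B' X : C} {d : B ⟶ X} (hd : Ex.AdmEpi d) (φ : B' ⟶ B)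
    [IsIso φ] : Ex.AdmEpi (φ ≫ d) := by
  obtain ⟨A, i, hE⟩ := hd
  exact ⟨A, i ≫ inv φ,
    Ex.iso_closed (Iso.refl A) (asIso φ).symm (Iso.refl X) hE (by simp) (by simp)⟩

theorem AdmEpi.isIso_of_mono {B X : C} {e : B ⟶ X} (he : Ex.AdmEpi e) [Mono e] : IsIso e := by
  have := he.epi
  obtain ⟨A, i, hE⟩ := he
  have hi : i = 0 := by rw [← cancel_mono e, zero_comp, (Ex.pair hE).w]
  obtain ⟨u, hu⟩ :=
    CokernelCofork.IsColimit.desc' (Ex.pair hE).isCokernel.some (𝟙 B) (by simp [hi])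
  have : IsSplitMono e := .mk' ⟨u, hu⟩
  exact isIso_of_epi_of_isSplitMono e

theorem AdmMono.isIso_of_epi {A B : C} {m : A ⟶ B} (hm : Ex.AdmMono m) [Epi m] : IsIso m := by
  have := hm.mono
  obtain ⟨X, d, hE⟩ := hm
  have hd : d = 0 := by rw [← cancel_epi m, comp_zero, (Ex.pair hE).w]
  obtain ⟨u, hu⟩ := KernelFork.IsLimit.lift' (Ex.pair hE).isKernel.some (𝟙 B) (by simp [hd])
  have : IsSplitEpi m := .mk' ⟨u, hu⟩
  exact isIso_of_mono_of_isSplitEpi m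

theorem AdmMono.of_isPushout {A B Z P : C} {i : A ⟶ B} {f : A ⟶ Z} {g : B ⟶ P} {j : Z ⟶ P}
    (hi : Ex.AdmMono i) (hsq : IsPushout i f g j) : Ex.AdmMono j := by
  obtain ⟨_, g', j', _, ⟨hc⟩, hj'⟩ := Ex.pushout_admMono i f hi
  have hsq' : IsPushout i f g' j' := .of_isColimit hc
  simpa using AdmMono.comp_isIso hj' (hsq'.isoIsPushout _ _ hsq).hom

theorem AdmEpi.of_isPullback {A B D Z : C} {f : A ⟶ B} {k : A ⟶ Z} {h : B ⟶ D} {g : Z ⟶ D}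
    (hh : Ex.AdmEpi h) (hsq : IsPullback f k h g) : Ex.AdmEpi k := by
  obtain ⟨_, f', k', _, ⟨hl⟩, hk'⟩ := Ex.pullback_admEpi h g hh
  have hsq' : IsPullback f' k' h g := .of_isLimit hl
  simpa using AdmEpi.isIso_comp hk' (hsq.isoIsPullback _ _ hsq').hom

open ZeroObject in
theorem admMono_zero [HasZeroObject C] (B : C) : Ex.AdmMono (0 : 0 ⟶ B) := by
  obtain ⟨X, i, hE⟩ := Ex.admEpi_id B
  have : Mono i := AdmMono.mono ⟨_, _, hE⟩
  have hX : IsZero X := .of_mono_eq_zero i (by simpa using (Ex.pair hE).w)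
  exact ⟨B, 𝟙 B,
    Ex.iso_closed hX.isoZero (Iso.refl B) (Iso.refl B) hE (hX.eq_of_src _ _) rfl⟩

open ZeroObject in
theorem admEpi_zero [HasZeroObject C] (A : C) : Ex.AdmEpi (0 : A ⟶ 0) := by
  obtain ⟨X, d, hE⟩ := Ex.admMono_id A
  have : Epi d := AdmEpi.epi ⟨_, _, hE⟩
  have hX : IsZero X := .of_epi_eq_zero d (by simpa using (Ex.pair hE).w)
  exact ⟨A, 𝟙 A, Ex.iso_closed (Iso.refl A) (Iso.refl A) hX.isoZero hE rfl
    ((isZero_zero C).eq_of_tgt _ _)⟩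

theorem admMono_biprod_inl [HasZeroObject C] [HasBinaryBiproducts C] (A B : C) :
    Ex.AdmMono (biprod.inl : A ⟶ A ⊞ B) :=
  (admMono_zero B).of_isPushout (IsPushout.of_has_biproduct A B).flip

theorem admEpi_biprod_snd [HasZeroObject C] [HasBinaryBiproducts C] (A B : C) :
    Ex.AdmEpi (biprod.snd : A ⊞ B ⟶ B) :=
  (admEpi_zero A).of_isPullback (IsPullback.of_has_biproduct A B)

theorem admMono_biprod_lift_id [HasZeroObject C] [HasBinaryBiproducts C] {X Y : C}
    (f : X ⟶ Y) : Ex.AdmMono (biprod.lift (𝟙 X) f) := by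
  have hlift : biprod.lift (𝟙 X) f = biprod.inl ≫ (Biprod.unipotentUpper f).hom := by
    ext <;> simp [Biprod.unipotentUpper, Biprod.ofComponents]
  rw [hlift]
  exact (admMono_biprod_inl X Y).comp_isIso _

theorem AdmMono.admissible {A B : C} {m : A ⟶ B} (hm : Ex.AdmMono m) : Ex.Admissible m :=
  ⟨A, 𝟙 A, m, Ex.admEpi_id A, hm, Category.id_comp m⟩

theorem AdmEpi.admissible {A B : C} {e : A ⟶ B} (he : Ex.AdmEpi e) : Ex.Admissible e :=
  ⟨B, e, 𝟙 B, he, Ex.admMono_id B, Category.comp_id e⟩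

theorem Admissible.admMono_of_mono {A B : C} {f : A ⟶ B} (hf : Ex.Admissible f) [Mono f] :
    Ex.AdmMono f := by
  obtain ⟨_, e, m, he, hm, rfl⟩ := hf
  have : Mono e := mono_of_mono e m
  have : IsIso e := he.isIso_of_mono
  exact hm.isIso_comp e

theorem Admissible.admEpi_of_epi {A B : C} {f : A ⟶ B} (hf : Ex.Admissible f) [Epi f] :
    Ex.AdmEpi f := by
  obtain ⟨_, e, m, he, hm, rfl⟩ := hf
  have : Epi m := epi_of_epi e m
  have : IsIso m := hm.isIso_of_epi
  exact he.comp_isIso m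

theorem Admissible.hasKernel {A B : C} {f : A ⟶ B} (hf : Ex.Admissible f) : HasKernel f := by
  obtain ⟨_, e, m, ⟨_, _, hE⟩, hm, rfl⟩ := hf
  have : Mono m := hm.mono
  exact ⟨⟨⟨_, isKernelCompMono (Ex.pair hE).isKernel.some m rfl⟩⟩⟩

theorem Admissible.hasCokernel {A B : C} {f : A ⟶ B} (hf : Ex.Admissible f) :
    HasCokernel f := by
  obtain ⟨_, e, m, he, ⟨_, _, hE⟩, rfl⟩ := hf
  have : Epi e := he.epi
  exact ⟨⟨⟨_, isCokernelEpiComp (Ex.pair hE).isCokernel.some e rfl⟩⟩⟩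

theorem AdmMono.normalMono {A B : C} {f : A ⟶ B} (hf : Ex.AdmMono f) :
    Nonempty (NormalMono f) := by
  obtain ⟨Q, d, hE⟩ := hf
  exact ⟨⟨Q, d, (Ex.pair hE).w, (Ex.pair hE).isKernel.some⟩⟩

theorem AdmEpi.normalEpi {A B : C} {f : A ⟶ B} (hf : Ex.AdmEpi f) :
    Nonempty (NormalEpi f) := by
  obtain ⟨K, i, hE⟩ := hf
  exact ⟨⟨K, i, (Ex.pair hE).w, (Ex.pair hE).isCokernel.some⟩⟩

theorem E_of_isKernelCokernelPair {A B X X' : C} {i : A ⟶ B} {d : B ⟶ X} {d' : B ⟶ X'}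
    (hE : Ex.E i d) (hid' : IsKernelCokernelPair i d') : Ex.E i d' := by
  let φ := (Ex.pair hE).isCokernel.some.coconePointUniqueUpToIso hid'.isCokernel.some
  refine Ex.iso_closed (Iso.refl A) (Iso.refl B) φ hE (by simp) ?_
  simpa using IsColimit.comp_coconePointUniqueUpToIso_hom (Ex.pair hE).isCokernel.some
    hid'.isCokernel.some WalkingParallelPair.one

theorem isMaximalAll_of_forall_admissible
    (hall : ∀ ⦃X Y : C⦄ (f : X ⟶ Y), Ex.Admissible f) : Ex.IsMaximalAll := by
  intro A B X i d hid
  have : Mono i := mono_of_isLimit_fork hid.isKernel.some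
  obtain ⟨_, _, hE⟩ := (hall i).admMono_of_mono
  exact E_of_isKernelCokernelPair hE hid

theorem isAbelianCat_of_forall_admissible [HasZeroObject C] [HasBinaryBiproducts C]
    (hall : ∀ ⦃X Y : C⦄ (f : X ⟶ Y), Ex.Admissible f) : IsAbelianCat C :=
  ⟨hasFiniteProducts_of_has_binary_and_terminal, ⟨fun f => (hall f).hasKernel⟩,
    ⟨fun f => (hall f).hasCokernel⟩, fun _ _ f _ => (hall f).admMono_of_mono.normalMono,
    fun _ _ f _ => (hall f).admEpi_of_epi.normalEpi⟩

end ExactStructure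

/-- If admissible morphisms are closed under composition, then the category is abelian,
the exact structure is the class of all kernel-cokernel pairs, every morphism factors
as the admissible section `[1, f]ᵀ` followed by the admissible retraction `[0, 1]`,
and every morphism is admissible. -/
theorem stmt1 [HasZeroObject C] [HasBinaryBiproducts C] (Ex : ExactStructure C)
    (h : ∀ ⦃X Y Z : C⦄ (f : X ⟶ Y) (g : Y ⟶ Z),
      Ex.Admissible f → Ex.Admissible g → Ex.Admissible (f ≫ g)) :
    IsAbelianCat C ∧ Ex.IsMaximalAll ∧
    (∀ ⦃X Y : C⦄ (f : X ⟶ Y),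
      Ex.Admissible (biprod.lift (𝟙 X) f) ∧ Ex.Admissible (biprod.snd : X ⊞ Y ⟶ Y) ∧
      biprod.lift (𝟙 X) f ≫ biprod.snd = f) ∧
    (∀ ⦃X Y : C⦄ (f : X ⟶ Y), Ex.Admissible f) := by
  have hlift : ∀ ⦃X Y : C⦄ (f : X ⟶ Y), Ex.Admissible (biprod.lift (𝟙 X) f) :=
    fun _ _ f => (ExactStructure.admMono_biprod_lift_id f).admissible
  have hsnd : ∀ X Y : C, Ex.Admissible (biprod.snd : X ⊞ Y ⟶ Y) :=
    fun X Y => (ExactStructure.admEpi_biprod_snd X Y).admissible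
  have hall : ∀ ⦃X Y : C⦄ (f : X ⟶ Y), Ex.Admissible f :=
    fun X Y f => by simpa using h _ _ (hlift f) (hsnd X Y)
  exact ⟨ExactStructure.isAbelianCat_of_forall_admissible hall,
    ExactStructure.isMaximalAll_of_forall_admissible hall,
    fun X Y f => ⟨hlift f, hsnd X Y, by simp⟩, hall⟩
end

section
/- (Fourth E-isomorphism theorem) Let (A, E) be an exact category and let X' ↣ X ↠ X/X' be a short exact sequence in E. Then the assignment M ↦ M/X' gives an isomorphism of posets between {M : there are admissible monics X' ↣ M ↣ X compatible with the inclusion X' ↣ X} and the poset of admissible (E-)subobjects of X/X'. -/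
open CategoryTheory CategoryTheory.Limits

universe v u

variable {C : Type u} [Category.{v} C] [Preadditive C]

/-- An object between `X'` and `X`: admissible monics `X' ↣ M ↣ X` compatible with the
inclusion `i : X' ↣ X`. -/
structure Between (Ex : ExactStructure C) {X' X : C} (i : X' ⟶ X) where
  obj : C
  j : X' ⟶ obj
  k : obj ⟶ X
  hj : Ex.AdmMono j
  hk : Ex.AdmMono k
  w : j ≫ k = i

/-- The order on objects between `X'` and `X`. -/
def BetweenLe (Ex : ExactStructure C) {X' X : C} {i : X' ⟶ X}
    (b₁ b₂ : Between Ex i) : Prop :=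
  ∃ h : b₁.obj ⟶ b₂.obj, Ex.AdmMono h ∧ h ≫ b₂.k = b₁.k ∧ b₁.j ≫ h = b₂.j

/-!
The quotient `M / X'` is an admissible subobject of `X / X'` by the Noether lemma (the induced
map on cokernels is a pushout of an admissible monic). The square formed by `M ↣ X`, `M ↠ M/X'`,
`X ↠ X/X'` and `M/X' ↣ X/X'` is a pullback, which gives the inverse (pull a subobject of `X/X'`
back along `X ↠ X/X'`) and lets an admissible monic `M₁/X' ↣ M₂/X'` be lifted to `M₁ ⟶ M₂`;
this lift is the kernel of `M₂ ↠ M₂/X' ↠ (M₂/X')/(M₁/X')`, hence admissible.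
-/

def isColimitCokernelCoforkOfPushout {A B X Qb D : C} {j : A ⟶ B} {c : B ⟶ Qb}
    {w₀ : j ≫ c = 0} (hc : IsColimit (CokernelCofork.ofπ c w₀)) {h : B ⟶ X} {g : X ⟶ D}
    {j' : Qb ⟶ D} {w : h ≫ g = c ≫ j'} (po : IsColimit (PushoutCocone.mk g j' w)) :
    IsColimit (CokernelCofork.ofπ (f := j ≫ h) g
      (by rw [Category.assoc, w, ← Category.assoc, w₀, zero_comp])) :=
  have : Epi c := epi_of_isColimit_cofork hc
  have hdesc : ∀ {T : C} (t : X ⟶ T) (ht : (j ≫ h) ≫ t = 0),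
      c ≫ hc.desc (CokernelCofork.ofπ (h ≫ t) (by rwa [← Category.assoc])) = h ≫ t :=
    fun _ _ => Cofork.IsColimit.π_desc hc
  CokernelCofork.IsColimit.ofπ g _
    (fun t ht => PushoutCocone.IsColimit.desc po t _ (hdesc t ht).symm)
    (fun t ht => PushoutCocone.IsColimit.inl_desc po t _ _)
    (fun t ht m hm => PushoutCocone.IsColimit.hom_ext po
      (hm.trans (PushoutCocone.IsColimit.inl_desc po t _ _).symm)
      ((cancel_epi c).1 (by
        change c ≫ j' ≫ m = _
        rw [PushoutCocone.IsColimit.inr_desc, hdesc t ht, ← hm, ← Category.assoc, ← w,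
          Category.assoc])))

namespace ExactStructure

variable (Ex : ExactStructure C)

lemma mono_of_E {A B X : C} {i : A ⟶ B} {d : B ⟶ X} (h : Ex.E i d) : Mono i := by
  obtain ⟨hl⟩ := (Ex.pair h).isKernel
  exact mono_of_isLimit_fork hl

lemma epi_of_E {A B X : C} {i : A ⟶ B} {d : B ⟶ X} (h : Ex.E i d) : Epi d := by
  obtain ⟨hc⟩ := (Ex.pair h).isCokernel
  exact epi_of_isColimit_cofork hc

lemma mono_of_admMono {A B : C} {i : A ⟶ B} (h : Ex.AdmMono i) : Mono i := by
  obtain ⟨_, _, hE⟩ := h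
  exact Ex.mono_of_E hE

lemma exists_lift_of_E {A B X T : C} {i : A ⟶ B} {d : B ⟶ X} (h : Ex.E i d)
    (t : T ⟶ B) (ht : t ≫ d = 0) : ∃ s : T ⟶ A, s ≫ i = t := by
  obtain ⟨hl⟩ := (Ex.pair h).isKernel
  exact ⟨_, (KernelFork.IsLimit.lift' hl t ht).2⟩

lemma exists_desc_of_E {A B X T : C} {i : A ⟶ B} {d : B ⟶ X} (h : Ex.E i d)
    (t : B ⟶ T) (ht : i ≫ t = 0) : ∃ s : X ⟶ T, d ≫ s = t := by
  obtain ⟨hc⟩ := (Ex.pair h).isCokernel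
  exact ⟨_, (CokernelCofork.IsColimit.desc' hc t ht).2⟩

lemma admMono_hom {A B : C} (e : A ≅ B) : Ex.AdmMono e.hom := by
  obtain ⟨W, d, hd⟩ := Ex.admMono_id A
  exact ⟨W, e.inv ≫ d, Ex.iso_closed (Iso.refl A) e (Iso.refl W) hd (by simp) (by simp)⟩

lemma E_of_forall_factors {A B X : C} {f : X ⟶ A} {q : A ⟶ B} (hq : Ex.AdmEpi q) [Mono f]
    (w : f ≫ q = 0) (hf : ∀ {T : C} (t : T ⟶ A), t ≫ q = 0 → ∃ v : T ⟶ X, v ≫ f = t) :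
    Ex.E f q := by
  obtain ⟨K, κ, hκ⟩ := hq
  obtain ⟨hκl⟩ := (Ex.pair hκ).isKernel
  have hfl : IsLimit (KernelFork.ofι f w) :=
    KernelFork.IsLimit.ofι' f w fun t ht => ⟨(hf t ht).choose, (hf t ht).choose_spec⟩
  have he : (hfl.conePointUniqueUpToIso hκl).hom ≫ κ = f :=
    hfl.conePointUniqueUpToIso_hom_comp hκl WalkingParallelPair.zero
  refine Ex.iso_closed (hfl.conePointUniqueUpToIso hκl).symm (Iso.refl A) (Iso.refl B) hκ ?_ ?_
  · simp [← he]
  · simp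

/-- Noether lemma: `m` is the leg `j'` of the pushout of `h` along `c`, whose other leg is a
cokernel of `j ≫ h`. -/
lemma exists_admMono_cokernel_map {A B X Qb Q' : C} {j : A ⟶ B} {c : B ⟶ Qb} {h : B ⟶ X}
    {p' : X ⟶ Q'} (hc : Ex.E j c) (hh : Ex.AdmMono h) (hp : Ex.E (j ≫ h) p') :
    ∃ m : Qb ⟶ Q', Ex.AdmMono m ∧ c ≫ m = h ≫ p' := by
  obtain ⟨D, g, j', w, ⟨po⟩, hj'⟩ := Ex.pushout_admMono h c hh
  obtain ⟨hcc⟩ := (Ex.pair hc).isCokernel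
  obtain ⟨hpc⟩ := (Ex.pair hp).isCokernel
  have hg := isColimitCokernelCoforkOfPushout hcc po
  obtain ⟨e, he⟩ : ∃ e : D ≅ Q', g ≫ e.hom = p' :=
    ⟨_, hg.comp_coconePointUniqueUpToIso_hom hpc WalkingParallelPair.one⟩
  refine ⟨j' ≫ e.hom, Ex.admMono_comp _ _ hj' (Ex.admMono_hom e), ?_⟩
  rw [← Category.assoc, ← w, Category.assoc, he]

/-- Pull `c` back along `u` to get an admissible epic `q : P ↠ T` and `f : P ⟶ M`; correct `f`
by a map through `j` so that it lies over `t`; then it kills `ker q` and descends along `q`. -/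
lemma exists_pullback_lift {X' M X QM Q T : C} {i : X' ⟶ X} {p : X ⟶ Q} (hE : Ex.E i p)
    {j : X' ⟶ M} {k : M ⟶ X} (hjk : j ≫ k = i) {c : M ⟶ QM} (hc : Ex.E j c)
    {ι : QM ⟶ Q} (hcomm : c ≫ ι = k ≫ p) (t : T ⟶ X) (u : T ⟶ QM) (htu : t ≫ p = u ≫ ι) :
    ∃ v : T ⟶ M, v ≫ k = t ∧ v ≫ c = u := by
  obtain ⟨P, f, q, wpb, -, K, κ, hκ⟩ := Ex.pullback_admEpi c u ⟨X', j, hc⟩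
  have hjc : j ≫ c = 0 := (Ex.pair hc).w
  have hκq : κ ≫ q = 0 := (Ex.pair hκ).w
  obtain ⟨s, hs⟩ := Ex.exists_lift_of_E hE (f ≫ k - q ≫ t) (by
    simp only [Preadditive.sub_comp, Category.assoc]
    rw [htu, ← hcomm, ← Category.assoc, ← Category.assoc, wpb, sub_self])
  have hf'k : (f - s ≫ j) ≫ k = q ≫ t := by
    simp only [Preadditive.sub_comp, Category.assoc]
    rw [hjk, hs]
    abel
  have hf'c : (f - s ≫ j) ≫ c = q ≫ u := by
    simp only [Preadditive.sub_comp, Category.assoc]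
    rw [hjc, comp_zero, sub_zero, wpb]
  have hκf' : κ ≫ (f - s ≫ j) = 0 := by
    obtain ⟨s', hs'⟩ := Ex.exists_lift_of_E hc (κ ≫ (f - s ≫ j)) (by
      rw [Category.assoc, hf'c, ← Category.assoc, hκq, zero_comp])
    have : Mono i := Ex.mono_of_E hE
    have hs'0 : s' = 0 := by
      rw [← cancel_mono i, zero_comp, ← hjk, ← Category.assoc, hs', Category.assoc, hf'k,
        ← Category.assoc, hκq, zero_comp]
    rw [← hs', hs'0, zero_comp]
  obtain ⟨v, hv⟩ := Ex.exists_desc_of_E hκ _ hκf'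
  have : Epi q := Ex.epi_of_E hκ
  exact ⟨v, by rw [← cancel_epi q, ← Category.assoc, hv, hf'k],
    by rw [← cancel_epi q, ← Category.assoc, hv, hf'c]⟩

end ExactStructure

namespace Between

variable {Ex : ExactStructure C} {X' X Q : C} {i : X' ⟶ X} {p : X ⟶ Q}

lemma le_refl (b : Between Ex i) : BetweenLe Ex b b :=
  ⟨𝟙 _, Ex.admMono_id _, by simp, by simp⟩

lemma exists_quotient (hE : Ex.E i p) (b : Between Ex i) :
    ∃ (QM : C) (c : b.obj ⟶ QM) (ι : QM ⟶ Q), Ex.E b.j c ∧ Ex.AdmMono ι ∧ c ≫ ι = b.k ≫ p := by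
  obtain ⟨QM, c, hc⟩ := b.hj
  obtain ⟨ι, hι, hcι⟩ := Ex.exists_admMono_cokernel_map hc b.hk (by rwa [b.w])
  exact ⟨QM, c, ι, hc, hι, hcι⟩

lemma exists_admMono_of_le {b₁ b₂ : Between Ex i} (hle : BetweenLe Ex b₁ b₂) {Q₁ Q₂ : C}
    {c₁ : b₁.obj ⟶ Q₁} {c₂ : b₂.obj ⟶ Q₂} {ι₁ : Q₁ ⟶ Q} {ι₂ : Q₂ ⟶ Q}
    (hc₁ : Ex.E b₁.j c₁) (hc₂ : Ex.E b₂.j c₂)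
    (hcι₁ : c₁ ≫ ι₁ = b₁.k ≫ p) (hcι₂ : c₂ ≫ ι₂ = b₂.k ≫ p) :
    ∃ m : Q₁ ⟶ Q₂, Ex.AdmMono m ∧ m ≫ ι₂ = ι₁ := by
  obtain ⟨h, hh, hk, hj⟩ := hle
  obtain ⟨m, hm, hcm⟩ := Ex.exists_admMono_cokernel_map hc₁ hh (by rwa [hj])
  have : Epi c₁ := Ex.epi_of_E hc₁
  refine ⟨m, hm, ?_⟩
  rw [← cancel_epi c₁, ← Category.assoc, hcm, Category.assoc, hcι₂, ← Category.assoc, hk, hcι₁]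

lemma le_of_admMono (hE : Ex.E i p) {b₁ b₂ : Between Ex i} {Q₁ Q₂ : C}
    {c₁ : b₁.obj ⟶ Q₁} {c₂ : b₂.obj ⟶ Q₂} {ι₁ : Q₁ ⟶ Q} {ι₂ : Q₂ ⟶ Q}
    (hc₁ : Ex.E b₁.j c₁) (hc₂ : Ex.E b₂.j c₂)
    (hcι₁ : c₁ ≫ ι₁ = b₁.k ≫ p) (hcι₂ : c₂ ≫ ι₂ = b₂.k ≫ p)
    {m : Q₁ ⟶ Q₂} (hm : Ex.AdmMono m) (hmι : m ≫ ι₂ = ι₁) : BetweenLe Ex b₁ b₂ := by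
  have : Mono b₁.k := Ex.mono_of_admMono b₁.hk
  have : Mono b₂.k := Ex.mono_of_admMono b₂.hk
  obtain ⟨h, hhk, hhc⟩ := Ex.exists_pullback_lift hE b₂.w hc₂ hcι₂ b₁.k (c₁ ≫ m)
    (by rw [← hcι₁, ← hmι, Category.assoc])
  have : Mono h := mono_of_mono_fac hhk
  obtain ⟨W, d, hd⟩ := hm
  have hmd : m ≫ d = 0 := (Ex.pair hd).w
  have hh : Ex.E h (c₂ ≫ d) := by
    refine Ex.E_of_forall_factors (Ex.admEpi_comp c₂ d ⟨X', b₂.j, hc₂⟩ ⟨Q₁, m, hd⟩)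
      (by rw [← Category.assoc, hhc, Category.assoc, hmd, comp_zero]) fun t ht => ?_
    obtain ⟨s, hs⟩ := Ex.exists_lift_of_E hd (t ≫ c₂) (by rwa [Category.assoc])
    obtain ⟨v, hvk, -⟩ := Ex.exists_pullback_lift hE b₁.w hc₁ hcι₁ (t ≫ b₂.k) s (by
      rw [← hmι, ← Category.assoc, hs, Category.assoc, Category.assoc, hcι₂])
    exact ⟨v, by rw [← cancel_mono b₂.k, Category.assoc, hhk, hvk]⟩
  refine ⟨h, ⟨W, c₂ ≫ d, hh⟩, hhk, ?_⟩
  rw [← cancel_mono b₂.k, Category.assoc, hhk, b₁.w, b₂.w]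

lemma exists_of_admMono (hE : Ex.E i p) {S : C} {ι : S ⟶ Q} (hι : Ex.AdmMono ι) :
    ∃ (b : Between Ex i) (c : b.obj ⟶ S), Ex.E b.j c ∧ c ≫ ι = b.k ≫ p := by
  obtain ⟨M, k, c, wpb, ⟨pb⟩, hcEpi⟩ := Ex.pullback_admEpi p ι ⟨X', i, hE⟩
  have : Mono i := Ex.mono_of_E hE
  have : Mono ι := Ex.mono_of_admMono hι
  have : Mono k := PullbackCone.mono_fst_of_is_pullback_of_mono pb
  have w₀ : i ≫ p = 0 ≫ ι := by rw [(Ex.pair hE).w, zero_comp]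
  obtain ⟨j, hjk, hjc⟩ : ∃ j : X' ⟶ M, j ≫ k = i ∧ j ≫ c = 0 :=
    ⟨_, (PullbackCone.IsLimit.lift' pb i 0 w₀).2⟩
  have : Mono j := mono_of_mono_fac hjk
  have hjE : Ex.E j c := by
    refine Ex.E_of_forall_factors hcEpi hjc fun t ht => ?_
    obtain ⟨s, hs⟩ := Ex.exists_lift_of_E hE (t ≫ k) (by
      rw [Category.assoc, wpb, ← Category.assoc, ht, zero_comp])
    exact ⟨s, by rw [← cancel_mono k, Category.assoc, hjk, hs]⟩
  obtain ⟨W, d, hd⟩ := hι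
  have hkE : Ex.E k (p ≫ d) := by
    refine Ex.E_of_forall_factors (Ex.admEpi_comp p d ⟨X', i, hE⟩ ⟨S, ι, hd⟩)
      (by rw [← Category.assoc, wpb, Category.assoc, (Ex.pair hd).w, comp_zero]) fun t ht => ?_
    obtain ⟨s, hs⟩ := Ex.exists_lift_of_E hd (t ≫ p) (by rwa [Category.assoc])
    exact ⟨PullbackCone.IsLimit.lift pb t s hs.symm, PullbackCone.IsLimit.lift_fst pb t s _⟩
  exact ⟨⟨M, j, k, ⟨S, c, hjE⟩, ⟨W, p ≫ d, hkE⟩, hjk⟩, c, hjE, wpb.symm⟩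

end Between

/-- The fourth `E`-isomorphism theorem: for a short exact sequence `X' ↣ X ↠ Q` in `E`,
the assignment `M ↦ M/X'` induces an isomorphism of posets between the objects between
`X'` and `X` and the admissible subobjects of `Q`. -/
theorem stmt3 (Ex : ExactStructure C) {X' X Q : C} (i : X' ⟶ X) (p : X ⟶ Q)
    (hE : Ex.E i p) :
    ∃ F : Between Ex i → ESub Ex Q,
      (∀ b, ∃ c : b.obj ⟶ (F b).obj, Ex.E b.j c ∧ b.k ≫ p = c ≫ (F b).ι) ∧
      (∀ b₁ b₂, BetweenLe Ex b₁ b₂ ↔ ESubLe Ex (F b₁) (F b₂)) ∧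
      (∀ s : ESub Ex Q, ∃ b, ESubEquiv Ex (F b) s) := by
  choose QM c ι hc hι hcι using Between.exists_quotient hE
  refine ⟨fun b => ⟨QM b, ι b, hι b⟩, fun b => ⟨c b, hc b, (hcι b).symm⟩,
    fun b₁ b₂ => ⟨fun hle => Between.exists_admMono_of_le hle (hc b₁) (hc b₂) (hcι b₁) (hcι b₂),
      fun ⟨_, hm, hmι⟩ => Between.le_of_admMono hE (hc b₁) (hc b₂) (hcι b₁) (hcι b₂) hm hmι⟩,
    fun s => ?_⟩
  obtain ⟨b, c', hc', hcι'⟩ := Between.exists_of_admMono hE s.adm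
  exact ⟨b, Between.exists_admMono_of_le b.le_refl (hc b) hc' (hcι b) hcι',
    Between.exists_admMono_of_le b.le_refl hc' (hc b) hcι' (hcι b)⟩
end

section
/- (E-Schur lemma) Let (A, E) be an exact category and f: X → Y a non-zero admissible morphism. If X is E-simple then f is an admissible monic; if Y is E-simple then f is an admissible epic. -/
open CategoryTheory CategoryTheory.Limits

universe v u

variable {C : Type u} [Category.{v} C] [Preadditive C]

/-- The `E`-Schur lemma: a non-zero admissible morphism out of an `E`-simple object is
an admissible monic, and into an `E`-simple object is an admissible epic. -/
theorem stmt4 (Ex : ExactStructure C) {X Y : C} (f : X ⟶ Y)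
    (hadm : Ex.Admissible f) (hne : f ≠ 0) :
    (Ex.ESimple X → Ex.AdmMono f) ∧ (Ex.ESimple Y → Ex.AdmEpi f) := by
  obtain ⟨Z, e, m, ⟨A, i, hie⟩, hm, hem⟩ := hadm
  obtain ⟨w, ⟨hk⟩, ⟨hc⟩⟩ := Ex.pair hie
  constructor
  · intro hX
    rcases hX.2 i ⟨Z, e, hie⟩ with hA | hi
    · -- kernel is zero, so e is iso
      have hi0 : i = 0 := hA.eq_of_src i 0
      obtain ⟨u, hu⟩ := Cofork.IsColimit.desc' hc (𝟙 X) (by simp [hi0])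
      simp only [Cofork.π_ofπ] at hu
      have hue : u ≫ e = 𝟙 Z := by
        apply Cofork.IsColimit.hom_ext hc
        simp only [Cofork.π_ofπ]
        rw [← Category.assoc, hu]; simp
      obtain ⟨X0, d, hd⟩ := Ex.admMono_id Z
      have hiso : IsIso e := ⟨u, hu, hue⟩
      have he : Ex.E e d :=
        Ex.iso_closed (asIso e).symm (Iso.refl Z) (Iso.refl X0) hd (by simp) (by simp)
      have := Ex.admMono_comp e m ⟨X0, d, he⟩ hm
      rwa [hem] at this
    · exfalso
      apply hne
      have he0 : e = 0 := by
        rw [← Category.id_comp e, ← IsIso.inv_hom_id i, Category.assoc, w, comp_zero]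
      rw [← hem, he0, zero_comp]
  · intro hY
    obtain ⟨X0, d, hmd⟩ := hm
    rcases hY.2 m ⟨X0, d, hmd⟩ with hZ | hmiso
    · exfalso
      apply hne
      have hm0 : m = 0 := hZ.eq_of_src m 0
      rw [← hem, hm0, comp_zero]
    · obtain ⟨W, j, hj⟩ := Ex.admEpi_id Z
      have hm' : Ex.E j m :=
        Ex.iso_closed (Iso.refl W) (Iso.refl Z) (asIso m) hj (by simp) (by simp)
      have := Ex.admEpi_comp e m ⟨A, i, hie⟩ ⟨W, j, hm'⟩
      rwa [hem] at this
end

section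
/- Every additive category on which the class of all kernel-cokernel pairs forms an exact structure is quasi-abelian. Combined with the fact that AI-categories carry the exact structure of all kernel-cokernel pairs, every AI-category is quasi-abelian. -/
open CategoryTheory CategoryTheory.Limits

universe v u

variable {C : Type u} [Category.{v} C] [Preadditive C]

/-! If every kernel-cokernel pair is admissible, then every kernel is an admissible monic and
every cokernel an admissible epic, and the pushout and pullback axioms of an exact structure
are exactly the stability properties defining quasi-abelian categories.

Under (AI), a kernel `i` of `d : B ⟶ X` is the intersection of the two admissible monics
`inl` and `(1, d) = inl ≫ shear` from `B` into `B ⊞ X`, hence admissible; its admissible cokernel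
is then isomorphic to `d`. The biproduct `B ⊞ X` is supplied by the exact structure itself, as the
pushout of the admissible monic `0 ⟶ X` along `0 ⟶ B`. -/

open Preadditive

lemma isKernelCokernelPair_cokernel_π {A B : C} {f : A ⟶ B} [HasCokernel f]
    (hf : IsKernelMor f) : IsKernelCokernelPair f (cokernel.π f) := by
  obtain ⟨Z, g, wg, ⟨hl⟩⟩ := hf
  have : Mono f := mono_of_isLimit_fork hl
  refine ⟨cokernel.condition f, ⟨KernelFork.IsLimit.ofι' f _ fun k hk => ?_⟩,
    ⟨cokernelIsCokernel f⟩⟩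
  refine KernelFork.IsLimit.lift' hl k ?_
  rw [← cokernel.π_desc f g wg, reassoc_of% hk, zero_comp]

lemma isKernelCokernelPair_kernel_ι {B X : C} {f : B ⟶ X} [HasKernel f]
    (hf : IsCokernelMor f) : IsKernelCokernelPair (kernel.ι f) f := by
  obtain ⟨Z, g, wg, ⟨hc⟩⟩ := hf
  have : Epi f := epi_of_isColimit_cofork hc
  refine ⟨kernel.condition f, ⟨kernelIsKernel f⟩,
    ⟨CokernelCofork.IsColimit.ofπ' f _ fun k hk => ?_⟩⟩
  refine CokernelCofork.IsColimit.desc' hc k ?_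
  rw [← kernel.lift_ι f g wg, Category.assoc, hk, comp_zero]

namespace CategoryTheory.Limits.BinaryBicone

variable {B X : C} (b : BinaryBicone B X) (d : B ⟶ X)

def shear : b.pt ≅ b.pt where
  hom := 𝟙 _ + b.fst ≫ d ≫ b.inr
  inv := 𝟙 _ - b.fst ≫ d ≫ b.inr
  hom_inv_id := by simp [add_comp, comp_sub]
  inv_hom_id := by simp [sub_comp, comp_add]

lemma inl_shear_hom : b.inl ≫ (b.shear d).hom = b.inl + d ≫ b.inr := by
  simp [shear, comp_add]

def isLimitPullbackConeInlInlAdd {A : C} {i : A ⟶ B} {w : i ≫ d = 0}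
    (hi : IsLimit (KernelFork.ofι i w)) (hw : i ≫ b.inl = i ≫ (b.inl + d ≫ b.inr)) :
    IsLimit (PullbackCone.mk i i hw) := by
  have : Mono i := mono_of_isLimit_fork hi
  have fst_eq_snd (s : PullbackCone b.inl (b.inl + d ≫ b.inr)) : s.fst = s.snd := by
    simpa [add_comp] using s.condition =≫ b.fst
  have snd_comp (s : PullbackCone b.inl (b.inl + d ≫ b.inr)) : s.snd ≫ d = 0 := by
    simpa [add_comp] using (s.condition =≫ b.snd).symm
  refine PullbackCone.IsLimit.mk hw (fun s => (KernelFork.IsLimit.lift' hi _ (snd_comp s)).1)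
    (fun s => ?_) (fun s => (KernelFork.IsLimit.lift' hi _ (snd_comp s)).2)
    (fun s m _ hm => ?_)
  · rw [fst_eq_snd s]
    exact (KernelFork.IsLimit.lift' hi _ (snd_comp s)).2
  · rw [← cancel_mono i, hm]
    exact (KernelFork.IsLimit.lift' hi _ (snd_comp s)).2.symm

end CategoryTheory.Limits.BinaryBicone

namespace ExactStructure

variable (Ex : ExactStructure C)

lemma admMono_comp_iso {A B B' : C} {f : A ⟶ B} (hf : Ex.AdmMono f) (e : B ≅ B') :
    Ex.AdmMono (f ≫ e.hom) := by
  obtain ⟨X, d, hE⟩ := hf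
  exact ⟨X, e.inv ≫ d, Ex.iso_closed (Iso.refl A) e (Iso.refl X) hE (by simp) (by simp)⟩

lemma admMono_iso_comp {A' A B : C} (e : A' ≅ A) {f : A ⟶ B} (hf : Ex.AdmMono f) :
    Ex.AdmMono (e.hom ≫ f) := by
  obtain ⟨X, d, hE⟩ := hf
  exact ⟨X, d, Ex.iso_closed e.symm (Iso.refl B) (Iso.refl X) hE (by simp) (by simp)⟩

lemma admEpi_iso_comp {P B X : C} (e : P ≅ B) {d : B ⟶ X} (hd : Ex.AdmEpi d) :
    Ex.AdmEpi (e.hom ≫ d) := by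
  obtain ⟨A, i, hE⟩ := hd
  exact ⟨A, i ≫ e.inv, Ex.iso_closed (Iso.refl A) e.symm (Iso.refl X) hE (by simp) (by simp)⟩

lemma isKernelMor_of_admMono {A B : C} {i : A ⟶ B} (hi : Ex.AdmMono i) : IsKernelMor i :=
  let ⟨X, d, hE⟩ := hi
  ⟨X, d, (Ex.pair hE).w, (Ex.pair hE).isKernel⟩

lemma isCokernelMor_of_admEpi {B X : C} {d : B ⟶ X} (hd : Ex.AdmEpi d) : IsCokernelMor d :=
  let ⟨A, i, hE⟩ := hd
  ⟨A, i, (Ex.pair hE).w, (Ex.pair hE).isCokernel⟩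

lemma admMono_of_isPushout {A B Z P : C} {f : A ⟶ B} (t : A ⟶ Z) (hf : Ex.AdmMono f)
    {s : B ⟶ P} {s' : Z ⟶ P} {w : f ≫ s = t ≫ s'} (hP : IsColimit (PushoutCocone.mk s s' w)) :
    Ex.AdmMono s' := by
  obtain ⟨D, g, j, w', ⟨hD⟩, hj⟩ := Ex.pushout_admMono f t hf
  have he : j ≫ (hD.coconePointUniqueUpToIso hP).hom = s' :=
    hD.comp_coconePointUniqueUpToIso_hom hP WalkingSpan.right
  exact he ▸ Ex.admMono_comp_iso hj _

lemma admEpi_of_isPullback {A B Z P : C} {f : B ⟶ A} (t : Z ⟶ A) (hf : Ex.AdmEpi f)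
    {s : P ⟶ B} {s' : P ⟶ Z} {w : s ≫ f = s' ≫ t} (hP : IsLimit (PullbackCone.mk s s' w)) :
    Ex.AdmEpi s' := by
  obtain ⟨D, g, k, w', ⟨hD⟩, hk⟩ := Ex.pullback_admEpi f t hf
  have he : (hP.conePointUniqueUpToIso hD).hom ≫ k = s' :=
    hP.conePointUniqueUpToIso_hom_comp hD WalkingCospan.right
  exact he ▸ Ex.admEpi_iso_comp _ hk

lemma isQuasiAbelian_of_isMaximalAll [HasKernels C] [HasCokernels C] (hmax : Ex.IsMaximalAll) :
    IsQuasiAbelian C :=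
  ⟨inferInstance, inferInstance,
    fun _ _ _ _ t hf _ _ _ _ hP => Ex.isKernelMor_of_admMono <|
      Ex.admMono_of_isPushout t ⟨_, _, hmax _ _ (isKernelCokernelPair_cokernel_π hf)⟩ hP,
    fun _ _ _ _ t hf _ _ _ _ hP => Ex.isCokernelMor_of_admEpi <|
      Ex.admEpi_of_isPullback t ⟨_, _, hmax _ _ (isKernelCokernelPair_kernel_ι hf)⟩ hP⟩

lemma E_of_admMono {A B X : C} {i : A ⟶ B} {d : B ⟶ X} (hi : Ex.AdmMono i)
    (hp : IsKernelCokernelPair i d) : Ex.E i d := by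
  obtain ⟨X₀, d₀, hE⟩ := hi
  obtain ⟨_, _, ⟨hcok₀⟩⟩ := Ex.pair hE
  let e := hcok₀.coconePointUniqueUpToIso hp.isCokernel.some
  have he : d₀ ≫ e.hom = d := hcok₀.comp_coconePointUniqueUpToIso_hom _ WalkingParallelPair.one
  exact Ex.iso_closed (Iso.refl A) (Iso.refl B) e hE (by simp) (by simp [he])

lemma isZero_of_E_id {Z B : C} {z : Z ⟶ B} (h : Ex.E z (𝟙 B)) : IsZero Z :=
  KernelFork.IsLimit.isZero_of_mono (Ex.pair h).isKernel.some

lemma exists_binaryBicone_admMono_inl (B X : C) : ∃ b : BinaryBicone B X, Ex.AdmMono b.inl := by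
  obtain ⟨Z, z, hz⟩ := Ex.admEpi_id X
  have hZ : IsZero Z := Ex.isZero_of_E_id hz
  obtain ⟨D, inr, inl, w, ⟨hD⟩, hinl⟩ := Ex.pushout_admMono z (0 : Z ⟶ B) ⟨X, 𝟙 X, hz⟩
  exact ⟨{ pt := D, inl := inl, inr := inr
           fst := PushoutCocone.IsColimit.desc hD 0 (𝟙 B) (hZ.eq_of_src _ _)
           snd := PushoutCocone.IsColimit.desc hD (𝟙 X) 0 (hZ.eq_of_src _ _)
           inl_fst := PushoutCocone.IsColimit.inr_desc hD _ _ _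
           inl_snd := PushoutCocone.IsColimit.inr_desc hD _ _ _
           inr_fst := PushoutCocone.IsColimit.inl_desc hD _ _ _
           inr_snd := PushoutCocone.IsColimit.inl_desc hD _ _ _ }, hinl⟩

lemma admMono_of_isKernelMor (hAI : AIAxiom Ex) {A B : C} {i : A ⟶ B} (hi : IsKernelMor i) :
    Ex.AdmMono i := by
  obtain ⟨X, d, w, ⟨hker⟩⟩ := hi
  obtain ⟨b, hinl⟩ := Ex.exists_binaryBicone_admMono_inl B X
  have hgraph : Ex.AdmMono (b.inl + d ≫ b.inr) :=
    b.inl_shear_hom d ▸ Ex.admMono_comp_iso hinl _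
  obtain ⟨A', f, f', w', hf, -, ⟨hlim⟩⟩ := hAI _ _ hinl hgraph
  have hsq : i ≫ b.inl = i ≫ (b.inl + d ≫ b.inr) := by simp [comp_add, reassoc_of% w]
  have he : ((b.isLimitPullbackConeInlInlAdd d hker hsq).conePointUniqueUpToIso hlim).hom ≫
      f = i :=
    IsLimit.conePointUniqueUpToIso_hom_comp _ hlim WalkingCospan.left
  exact he ▸ Ex.admMono_iso_comp _ hf

lemma isMaximalAll_of_AIAxiom (hAI : AIAxiom Ex) : Ex.IsMaximalAll :=
  fun _ _ _ _ _ hp => Ex.E_of_admMono (Ex.admMono_of_isKernelMor hAI ⟨_, _, hp.w, hp.isKernel⟩) hp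

end ExactStructure

/-- Every additive (pre-abelian) category on which the class of all kernel-cokernel
pairs forms an exact structure is quasi-abelian; in particular, every AI-category is
quasi-abelian. -/
theorem stmt8 [HasKernels C] [HasCokernels C] :
    ((∃ Ex : ExactStructure C, ∀ ⦃A B Z : C⦄ (i : A ⟶ B) (d : B ⟶ Z),
        Ex.E i d ↔ IsKernelCokernelPair i d) → IsQuasiAbelian C) ∧
    (∀ Ex : ExactStructure C, AIAxiom Ex → IsQuasiAbelian C) :=
  ⟨fun ⟨Ex, hE⟩ => Ex.isQuasiAbelian_of_isMaximalAll fun _ _ _ i d => (hE i d).mpr,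
    fun Ex hAI => Ex.isQuasiAbelian_of_isMaximalAll (Ex.isMaximalAll_of_AIAxiom hAI)⟩
end

section
/- (Second E-isomorphism theorem / parallelogram identity) Let (A, E) be an AIS-category and let X, Y be E-subobjects of an object Z. Then there is a short exact sequence X ∩_Z Y ↣ Y ↠ (X +_Z Y)/X in E; in particular Y / (X ∩_Z Y) ≅ (X +_Z Y)/X. -/
open CategoryTheory CategoryTheory.Limits

universe v u

variable {C : Type u} [Category.{v} C] [Preadditive C]

/-!
By (AI) the pullback leg `q` of the admissible monic `Ys.ι` is again an admissible monic, so it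
only remains to identify its cokernel. Pushout squares preserve cokernels: a cokernel `c` of `jX`,
precomposed with `jY`, is a cokernel of `q`. As `E` is closed under isomorphism, any cokernel of
an admissible monic completes it to a conflation, in particular `(q, jY ≫ c)`.
-/

namespace CategoryTheory.IsPushout

variable {𝒞 : Type*} [Category 𝒞] [HasZeroMorphisms 𝒞]
  {I X Y S Q : 𝒞} {p : I ⟶ X} {q : I ⟶ Y} {jX : X ⟶ S} {jY : Y ⟶ S}

noncomputable def isColimitCokernelCoforkInrComp (sq : IsPushout p q jX jY) {c : S ⟶ Q}
    {hc : jX ≫ c = 0} (hcoker : IsColimit (CokernelCofork.ofπ c hc)) :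
    IsColimit (CokernelCofork.ofπ (jY ≫ c)
      (by rw [← Category.assoc, ← sq.w, Category.assoc, hc, comp_zero])) :=
  Cofork.IsColimit.mk' _ fun s => by
    have hs : q ≫ s.π = 0 := by simp [s.condition]
    obtain ⟨l, hl⟩ := CokernelCofork.IsColimit.desc' hcoker (sq.desc 0 s.π (by simp [hs]))
      (sq.inl_desc ..)
    replace hl : c ≫ l = sq.desc 0 s.π _ := hl
    refine ⟨l, by simp [hl], fun {m} hm => ?_⟩
    refine Cofork.IsColimit.hom_ext hcoker (sq.hom_ext ?_ ?_)
    · simp [hl, reassoc_of% hc]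
    · simpa [hl] using hm

end CategoryTheory.IsPushout

namespace ExactStructure

theorem E_of_isColimit_cokernelCofork (Ex : ExactStructure C) {A B K K' : C}
    {i : A ⟶ B} {d : B ⟶ K} (h : Ex.E i d)
    {d' : B ⟶ K'} {w : i ≫ d' = 0} (hd' : IsColimit (CokernelCofork.ofπ d' w)) :
    Ex.E i d' :=
  let e := IsColimit.coconePointUniqueUpToIso (Ex.pair h).isCokernel.some hd'
  Ex.iso_closed (Iso.refl _) (Iso.refl _) e h (by simp) (by
    simpa [e] using IsColimit.comp_coconePointUniqueUpToIso_hom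
      (Ex.pair h).isCokernel.some hd' WalkingParallelPair.one)

theorem AdmMono.of_iso {Ex : ExactStructure C} {A A' B : C} {i : A ⟶ B} {i' : A' ⟶ B}
    (h : Ex.AdmMono i) (e : A ≅ A')
    (he : e.hom ≫ i' = i) : Ex.AdmMono i' :=
  let ⟨_, d, hE⟩ := h
  ⟨_, d, Ex.iso_closed e (Iso.refl _) (Iso.refl _) hE (by simp [he]) (by simp)⟩

end ExactStructure

theorem AIAxiom.admMono_snd_of_isLimit {Ex : ExactStructure C} (hAI : AIAxiom Ex)
    {A B Y D : C} {g : B ⟶ D} {j : Y ⟶ D} (hg : Ex.AdmMono g) (hj : Ex.AdmMono j)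
    {f : A ⟶ B} {f' : A ⟶ Y} {w : f ≫ g = f' ≫ j}
    (hlim : IsLimit (PullbackCone.mk f f' w)) :
    Ex.AdmMono f' :=
  let ⟨_, _, _, _, _, hf', ⟨hlim'⟩⟩ := hAI g j hg hj
  hf'.of_iso (IsLimit.conePointUniqueUpToIso hlim' hlim)
    (IsLimit.conePointUniqueUpToIso_hom_comp hlim' hlim WalkingCospan.right)

theorem stmt14_general (Ex : ExactStructure C)
    (hAIS : AISCat Ex) {Z : C} (Xs Ys : ESub Ex Z)
    {I : C} (p : I ⟶ Xs.obj) (q : I ⟶ Ys.obj) (w : p ≫ Xs.ι = q ≫ Ys.ι)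
    (hlim : IsLimit (PullbackCone.mk p q w))
    {S : C} (jX : Xs.obj ⟶ S) (jY : Ys.obj ⟶ S) (w' : p ≫ jX = q ≫ jY)
    (hcolim : IsColimit (PushoutCocone.mk jX jY w'))
    {Q : C} (c : S ⟶ Q) (hc : Ex.E jX c) :
    Ex.E q (jY ≫ c) := by
  obtain ⟨_, _, hq⟩ := hAIS.1.admMono_snd_of_isLimit Xs.adm Ys.adm hlim
  exact Ex.E_of_isColimit_cokernelCofork hq
    ((IsPushout.of_isColimit hcolim).isColimitCokernelCoforkInrComp
      (Ex.pair hc).isCokernel.some)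

/-- The second `E`-isomorphism theorem (parallelogram identity) in an AIS-category:
for `E`-subobjects `X`, `Y` of `Z` with intersection `I` (pullback) and sum `S`
(pushout over `I`), and `c : S ↠ Q` the cokernel of `X ↣ S`, the sequence
`I ↣ Y ↠ Q` is a short exact sequence in `E`; in particular
`Y/(X ∩ Y) ≅ (X + Y)/X`. -/
theorem stmt14 [HasKernels C] [HasCokernels C] (Ex : ExactStructure C)
    (hAIS : AISCat Ex) {Z : C} (Xs Ys : ESub Ex Z)
    {I : C} (p : I ⟶ Xs.obj) (q : I ⟶ Ys.obj) (w : p ≫ Xs.ι = q ≫ Ys.ι)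
    (hlim : IsLimit (PullbackCone.mk p q w))
    {S : C} (jX : Xs.obj ⟶ S) (jY : Ys.obj ⟶ S) (w' : p ≫ jX = q ≫ jY)
    (hcolim : IsColimit (PushoutCocone.mk jX jY w'))
    {Q : C} (c : S ⟶ Q) (hc : Ex.E jX c) :
    Ex.E q (jY ≫ c) :=
  stmt14_general Ex hAIS Xs Ys p q w hlim jX jY w' hcolim c hc
end

section
/- Let (A, E) be an E-finite Jordan-Hölder exact category and X ↣ Z ↠ Y an admissible short exact sequence of objects of finite E-length. Then the Jordan-Hölder lengths satisfy l_E(Z) = l_E(X) + l_E(Y). Moreover l_E is a length function: if X is an E-subobject of Y then l_E(X) ≤ l_E(Y). -/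
open CategoryTheory CategoryTheory.Limits

universe v u

variable {C : Type u} [Category.{v} C] [Preadditive C]

/-
Additivity is proved by induction on the length of `Y`. If `Y' ↣ Y ↠ Q` is the last step of a
composition series of `Y`, the pullback `A` of `Z ↠ Y` along `Y' ↣ Y` sits in admissible
sequences `X ↣ A ↠ Y'` and `A ↣ Z ↠ Q`; by induction `A` has a composition series of length
`l(X) + l(Y')`, and the simple step `A ↣ Z` extends it to one of `Z`. For monotonicity, an
admissible monic `X ↣ Y` with cokernel `Q` gives by additivity a composition series of `Y` of
length `l(X) + l(Q)`, which by the Jordan-Hölder property is `l(Y)`.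
-/

namespace CategoryTheory

open Limits

variable {C : Type u} [Category.{v} C] [HasZeroMorphisms C]
  {X A Z Y' Y Q : C} {f : A ⟶ Z} {e : A ⟶ Y'} {p : Z ⟶ Y} {j : Y' ⟶ Y}

noncomputable def IsPullback.isLimitKernelForkLift (sq : IsPullback f e p j) {i : X ⟶ Z}
    {wi : i ≫ p = 0} (hi : IsLimit (KernelFork.ofι i wi)) {u : X ⟶ A} (hu : u ≫ f = i)
    (wu : u ≫ e = 0) : IsLimit (KernelFork.ofι u wu) :=
  haveI : Mono i := Fork.IsLimit.mono hi
  haveI : Mono u := mono_of_mono_fac hu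
  KernelFork.IsLimit.ofι' u wu fun g hg =>
    let l := KernelFork.IsLimit.lift' hi (g ≫ f) (by
      rw [Category.assoc, sq.w, ← Category.assoc, hg, zero_comp])
    ⟨l.1, sq.hom_ext (by rw [Category.assoc, hu]; exact l.2)
      (by rw [Category.assoc, wu, comp_zero, hg])⟩

noncomputable def IsPullback.isLimitKernelForkComp (sq : IsPullback f e p j) {d : Y ⟶ Q}
    {wj : j ≫ d = 0} (hj : IsLimit (KernelFork.ofι j wj)) (wf : f ≫ p ≫ d = 0) :
    IsLimit (KernelFork.ofι f wf) :=
  haveI : Mono j := Fork.IsLimit.mono hj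
  haveI := sq.mono_fst_of_mono
  KernelFork.IsLimit.ofι' f wf fun g hg =>
    let l := KernelFork.IsLimit.lift' hj (g ≫ p) (by rw [Category.assoc, hg])
    ⟨sq.lift g l.1 l.2.symm, sq.lift_fst _ _ _⟩

end CategoryTheory

namespace ExactStructure

variable (Ex : ExactStructure C)

def IsSimpleStep {A B : C} (f : A ⟶ B) : Prop :=
  ∃ (Q : C) (d : B ⟶ Q), Ex.E f d ∧ Ex.ESimple Q

variable {Ex}

lemma E_of_isLimit_kernelFork {A A' B Q : C} {i : A ⟶ B} {d : B ⟶ Q} (h : Ex.E i d)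
    {f : A' ⟶ B} {w : f ≫ d = 0} (hf : IsLimit (KernelFork.ofι f w)) : Ex.E f d :=
  have hi := (Ex.pair h).isKernel.some
  Ex.iso_closed (hi.conePointUniqueUpToIso hf) (Iso.refl B) (Iso.refl Q) h
    (by simpa using (hi.conePointUniqueUpToIso_hom_comp hf .zero).symm) (by simp)

lemma IsSimpleStep.admMono {A B : C} {f : A ⟶ B} (h : Ex.IsSimpleStep f) : Ex.AdmMono f :=
  let ⟨Q, d, hE, _⟩ := h
  ⟨Q, d, hE⟩

lemma IsSimpleStep.iso_comp_comp {A A' B B' : C} {f : A ⟶ B} (h : Ex.IsSimpleStep f)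
    (eA : A' ≅ A) (eB : B ≅ B') : Ex.IsSimpleStep (eA.hom ≫ f ≫ eB.hom) :=
  let ⟨Q, d, hE, hQ⟩ := h
  ⟨Q, eB.inv ≫ d, Ex.iso_closed eA.symm eB (Iso.refl Q) hE (by simp) (by simp), hQ⟩

lemma exists_E_pullback {X Z Y Y' Q : C} {i : X ⟶ Z} {p : Z ⟶ Y} {j : Y' ⟶ Y} {d : Y ⟶ Q}
    (hip : Ex.E i p) (hjd : Ex.E j d) :
    ∃ (A : C) (u : X ⟶ A) (e : A ⟶ Y') (f : A ⟶ Z), Ex.E u e ∧ Ex.E f (p ≫ d) := by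
  obtain ⟨A, f, e, w, ⟨hpb⟩, X', i', hi'e⟩ := Ex.pullback_admEpi p j ⟨X, i, hip⟩
  have sq : IsPullback f e p j := IsPullback.of_isLimit hpb
  obtain ⟨u, hu, hue⟩ := sq.exists_lift i 0 (by rw [(Ex.pair hip).w, zero_comp])
  obtain ⟨K, k, hkq⟩ := Ex.admEpi_comp p d ⟨X, i, hip⟩ ⟨Y', j, hjd⟩
  have wf : f ≫ p ≫ d = 0 := by
    rw [← Category.assoc, sq.w, Category.assoc, (Ex.pair hjd).w, comp_zero]
  exact ⟨A, u, e, f, E_of_isLimit_kernelFork hi'e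
    (sq.isLimitKernelForkLift (Ex.pair hip).isKernel.some hu hue),
    E_of_isLimit_kernelFork hkq (sq.isLimitKernelForkComp (Ex.pair hjd).isKernel.some wf)⟩

end ExactStructure

namespace CompSeries

variable {Ex : ExactStructure C}

def ofSimpleSteps {X : C} {n : ℕ} (obj : Fin (n + 1) → C)
    (map : ∀ i : Fin n, obj i.castSucc ⟶ obj i.succ) (zero : IsZero (obj 0))
    (top : obj (Fin.last n) ≅ X) (step : ∀ i, Ex.IsSimpleStep (map i)) : CompSeries Ex X n :=
  ⟨obj, map, zero, top, fun i => (step i).admMono, step⟩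

def ofIsoTop {X X' : C} {n : ℕ} (s : CompSeries Ex X n) (e : X ≅ X') : CompSeries Ex X' n :=
  { s with top := s.top ≪≫ e }

lemma isZero_of_length_zero {X : C} (s : CompSeries Ex X 0) : IsZero X :=
  s.zero.of_iso s.top.symm

def dropLast {X : C} {n : ℕ} (s : CompSeries Ex X (n + 1)) :
    CompSeries Ex (s.obj (Fin.last n).castSucc) n where
  obj i := s.obj i.castSucc
  map i := s.map i.castSucc
  zero := s.zero
  top := Iso.refl _
  adm i := s.adm i.castSucc
  simpleFactor i := s.simpleFactor i.castSucc

lemma exists_isSimpleStep_last {X : C} {n : ℕ} (s : CompSeries Ex X (n + 1)) :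
    ∃ j : s.obj (Fin.last n).castSucc ⟶ X, Ex.IsSimpleStep j :=
  ⟨_, ExactStructure.IsSimpleStep.iso_comp_comp (s.simpleFactor (Fin.last n)) (Iso.refl _)
    (eqToIso (congrArg s.obj (Fin.succ_last n)) ≪≫ s.top)⟩

def snoc {X Z : C} {n : ℕ} (s : CompSeries Ex X n) (f : X ⟶ Z) (hf : Ex.IsSimpleStep f) :
    CompSeries Ex Z (n + 1) :=
  ofSimpleSteps (Fin.snoc s.obj Z)
    (Fin.lastCases
      ((eqToIso (Fin.snoc_castSucc ..) ≪≫ s.top).hom ≫ f ≫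
        (eqToIso (by rw [Fin.succ_last, Fin.snoc_last])).hom)
      fun i => (eqToIso (Fin.snoc_castSucc ..)).hom ≫ s.map i ≫
        (eqToIso (by rw [Fin.succ_castSucc, Fin.snoc_castSucc])).hom)
    (by simpa using s.zero) (eqToIso (Fin.snoc_last ..))
    (Fin.lastCases (by simpa only [Fin.lastCases_last] using hf.iso_comp_comp _ _)
      fun i => by
        simpa only [Fin.lastCases_castSucc] using
          ExactStructure.IsSimpleStep.iso_comp_comp (s.simpleFactor i) _ _)

end CompSeries

namespace ExactStructure

variable {Ex : ExactStructure C}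

lemma nonempty_compSeries_add_of_E {X Y Z : C} {i : X ⟶ Z} {p : Z ⟶ Y} (hip : Ex.E i p)
    {n m : ℕ} (sX : CompSeries Ex X n) (tY : CompSeries Ex Y m) :
    Nonempty (CompSeries Ex Z (n + m)) := by
  induction m generalizing Y Z with
  | zero =>
    have : IsIso i := KernelFork.IsLimit.isIso_ι _ (Ex.pair hip).isKernel.some
      (tY.isZero_of_length_zero.eq_of_tgt p 0)
    exact ⟨sX.ofIsoTop (asIso i)⟩
  | succ m ih =>
    obtain ⟨j, Q, d, hjd, hQ⟩ := tY.exists_isSimpleStep_last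
    obtain ⟨A, u, e, f, hue, hf⟩ := exists_E_pullback hip hjd
    obtain ⟨sA⟩ := ih hue tY.dropLast
    exact ⟨sA.snoc f ⟨Q, p ≫ d, hf, hQ⟩⟩

lemma compSeries_length_le_of_admMono (hJH : JordanHolder Ex)
    (hfin : ∀ X : C, ∃ n : ℕ, Nonempty (CompSeries Ex X n))
    {X Y : C} {ι : X ⟶ Y} (hι : Ex.AdmMono ι) {n m : ℕ} (sX : CompSeries Ex X n)
    (sY : CompSeries Ex Y m) : n ≤ m := by
  obtain ⟨Q, d, hd⟩ := hι
  obtain ⟨k, ⟨tQ⟩⟩ := hfin Q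
  obtain ⟨sY'⟩ := nonempty_compSeries_add_of_E hd sX tQ
  have := (hJH Y _ _ sY' sY).1
  omega

end ExactStructure

/-- In an `E`-finite Jordan-Hölder exact category the Jordan-Hölder length is additive
on admissible short exact sequences, and is monotone along admissible subobjects. -/
theorem stmt18 (Ex : ExactStructure C) (hJH : JordanHolder Ex)
    (hfin : ∀ X : C, ∃ n : ℕ, Nonempty (CompSeries Ex X n)) :
    (∀ ⦃X Y Z : C⦄ (i : X ⟶ Z) (p : Z ⟶ Y), Ex.E i p →
      ∀ (n m : ℕ), Nonempty (CompSeries Ex X n) → Nonempty (CompSeries Ex Y m) →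
        Nonempty (CompSeries Ex Z (n + m))) ∧
    (∀ ⦃X Y : C⦄ (ι : X ⟶ Y), Ex.AdmMono ι →
      ∀ (n m : ℕ), Nonempty (CompSeries Ex X n) → Nonempty (CompSeries Ex Y m) →
        n ≤ m) :=
  ⟨fun _ _ _ _ _ hip _ _ ⟨sX⟩ ⟨tY⟩ =>
      ExactStructure.nonempty_compSeries_add_of_E hip sX tY,
    fun _ _ _ hι _ _ ⟨sX⟩ ⟨sY⟩ =>
      ExactStructure.compSeries_length_le_of_admMono hJH hfin hι sX sY⟩
end
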